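/- arXiv:2003.06897 — 4 statements merged into one kernel-verified Lean document; each statement's English description precedes it below -/
import Mathlib

section
/- Let R be a right Noetherian ring, X a subcategory of mod-R closed under finite direct sums and direct summands, and suppose every module M in mod-R has finite X-dimension. Then every finitely presented functor F in mod-X has finite projective dimension in the abelian category mod-X. -/
/-! **Statement 7.** Let `R` be a right Noetherian ring, `X` a contravariantly
finite subcategory of `mod-R` containing the projectives, closed under finite
direct sums and direct summands, and suppose every module `M` in `mod-R` has
finite `X`-dimension.  Then every finitely presented functor `F` in `mod-X` has
finite projective dimension in `mod-X` (it admits a finite projective resolution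
by representable functors).

Right `R`-modules are `Rᵐᵒᵖ`-modules.  `X` is a predicate `P` on
`ModuleCat Rᵐᵒᵖ` consisting of finitely generated modules; exactness of
sequences of functors to `Ab` is pointwise and elementwise. -/

open CategoryTheory CategoryTheory.Limits

noncomputable section

variable (R : Type) [Ring R] (P : ModuleCat.{0} Rᵐᵒᵖ → Prop)

/-- The restricted Yoneda functor `Hom_R(−, X)|_X`. -/
def yonP (X : ObjectProperty.FullSubcategory P) :
    (ObjectProperty.FullSubcategory P)ᵒᵖ ⥤ AddCommGrpCat.{0} :=
  (ObjectProperty.ι P).op ⋙ preadditiveYoneda.obj X.obj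

/-- A functor `F : Xᵒᵖ → Ab` is finitely presented if it admits a presentation
`Hom(−,X₁) → Hom(−,X₀) → F → 0` by representable functors. -/
def FinPres (F : (ObjectProperty.FullSubcategory P)ᵒᵖ ⥤ AddCommGrpCat.{0}) : Prop :=
  ∃ (X₁ X₀ : ObjectProperty.FullSubcategory P) (α : yonP R P X₁ ⟶ yonP R P X₀)
    (π : yonP R P X₀ ⟶ F) (w : α ≫ π = 0),
    Nonempty (IsColimit (CokernelCofork.ofπ π w))

/-! By Yoneda the presentation of `F` is `Hom(−, f)` for a map `f : X₁ → X₀` in `X`. Since `R`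
is right Noetherian, `ker f` is finitely generated, so it has a finite `X`-resolution that stays
exact under `Hom(Z, −)` for `Z ∈ X`. As `Hom(Z, −)` is left exact,
`0 → Hom(Z, ker f) → Hom(Z, X₁) → Hom(Z, X₀)` is exact, and splicing this resolution onto `f`
gives a finite resolution of `F` by representable functors. -/

section

variable {C : Type*} [Category C] {F G H : C ⥤ AddCommGrpCat.{0}} {α : F ⟶ G} {π : G ⟶ H}
  {w : α ≫ π = 0}

lemma surjective_app_of_isCokernel (hc : IsColimit (CokernelCofork.ofπ π w)) (c : C) :
    Function.Surjective (π.app c) :=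
  (AddCommGrpCat.epi_iff_surjective _).mp <| epi_of_isColimit_cofork <|
    isColimitCoforkMapOfIsColimit' ((evaluation C AddCommGrpCat).obj c) w hc

lemma app_eq_zero_iff_of_isCokernel (hc : IsColimit (CokernelCofork.ofπ π w)) (c : C)
    (x : G.obj c) : π.app c x = 0 ↔ ∃ y, α.app c y = x := by
  let S : ShortComplex AddCommGrpCat.{0} := ShortComplex.mk (α.app c) (π.app c)
    (by rw [← NatTrans.comp_app, w, NatTrans.app_zero])
  have hS : S.Exact := S.exact_of_g_is_cokernel <|
    isColimitCoforkMapOfIsColimit' ((evaluation C AddCommGrpCat).obj c) w hc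
  refine ⟨S.ab_exact_iff.mp hS x, ?_⟩
  rintro ⟨y, rfl⟩
  exact ConcreteCategory.congr_hom (NatTrans.congr_app w c) y

end

section

variable {R} {P}

def yonMap {X Y : ObjectProperty.FullSubcategory P} (g : X.obj ⟶ Y.obj) :
    yonP R P X ⟶ yonP R P Y :=
  Functor.whiskerLeft (ObjectProperty.ι P).op (preadditiveYoneda.map g)

lemma exists_eq_yonMap {X Y : ObjectProperty.FullSubcategory P}
    (α : yonP R P X ⟶ yonP R P Y) :
    ∃ g : X.obj ⟶ Y.obj, α = yonMap g := by
  refine ⟨α.app (Opposite.op X) (𝟙 X.obj), ?_⟩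
  ext A x
  calc α.app A x = α.app A ((yonP R P X).map (ObjectProperty.homMk x).op (𝟙 X.obj)) :=
        congrArg (α.app A) (Category.comp_id x).symm
    _ = _ := NatTrans.naturality_apply α (ObjectProperty.homMk x).op (𝟙 X.obj)

lemma subsingleton_yonP_obj {Y : ObjectProperty.FullSubcategory P} [Subsingleton Y.obj]
    (A : ObjectProperty.FullSubcategory P) : Subsingleton ((yonP R P Y).obj (Opposite.op A)) :=
  ⟨fun _ _ => ModuleCat.hom_ext (LinearMap.ext fun _ => Subsingleton.elim _ _)⟩

/- Exactness of `Hom(Z, A) → Hom(Z, B) → Hom(Z, C)` for all `Z ∈ X`. Since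
`(yonMap g).app A x` is `x ≫ g` by definition, this is the pointwise exactness of the complex
of representables. -/
variable (P) in
def HomExact {A B C : ModuleCat.{0} Rᵐᵒᵖ} (g : A ⟶ B) (f : B ⟶ C) : Prop :=
  ∀ (Z : ObjectProperty.FullSubcategory P) (x : Z.obj ⟶ B),
    x ≫ f = 0 ↔ ∃ y : Z.obj ⟶ A, y ≫ g = x

lemma homExact_of_range_eq_ker {A B C : ModuleCat.{0} Rᵐᵒᵖ} {g : A ⟶ B} {f : B ⟶ C}
    (h : LinearMap.range g.hom = LinearMap.ker f.hom)
    (hlift : ∀ (Z : ObjectProperty.FullSubcategory P) (x : Z.obj ⟶ B), x ≫ f = 0 →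
      ∃ y : Z.obj ⟶ A, y ≫ g = x) :
    HomExact P g f := by
  have hgf : g ≫ f = 0 :=
    ModuleCat.hom_ext (LinearMap.exact_iff.mpr h.symm).linearMap_comp_eq_zero
  refine fun Z x => ⟨hlift Z x, ?_⟩
  rintro ⟨y, rfl⟩
  rw [Category.assoc, hgf, comp_zero]

lemma HomExact.comp_mono {A B C D : ModuleCat.{0} Rᵐᵒᵖ} {g : A ⟶ B} {f : B ⟶ C}
    (h : HomExact P g f) (ι : C ⟶ D) [Mono ι] : HomExact P g (f ≫ ι) := by
  intro Z x
  rw [← Category.assoc, ← zero_comp (f := ι), cancel_mono]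
  exact h Z x

lemma homExact_comp_subtype_ker {E X₁ X₀ : ModuleCat.{0} Rᵐᵒᵖ} (f : X₁ ⟶ X₀)
    (ε : E ⟶ ModuleCat.of Rᵐᵒᵖ (LinearMap.ker f.hom))
    (hε : ∀ (Z : ObjectProperty.FullSubcategory P)
      (h : Z.obj ⟶ ModuleCat.of Rᵐᵒᵖ (LinearMap.ker f.hom)),
      ∃ g : Z.obj ⟶ E, g ≫ ε = h) :
    HomExact P (ε ≫ ModuleCat.ofHom (LinearMap.ker f.hom).subtype) f := by
  intro Z x
  constructor
  · intro hx
    have hker : ∀ a, x a ∈ LinearMap.ker f.hom := fun a =>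
      LinearMap.mem_ker.mpr (ConcreteCategory.congr_hom hx a)
    obtain ⟨g, hg⟩ := hε Z (ModuleCat.ofHom (LinearMap.codRestrict _ x.hom hker))
    exact ⟨g, by rw [← Category.assoc, hg]; rfl⟩
  · rintro ⟨y, rfl⟩
    ext a
    exact (ε (y a)).2

end

section

variable {R} {P}

def spliceObj (X₀ X₁ : ObjectProperty.FullSubcategory P)
    (Xs : ℕ → ObjectProperty.FullSubcategory P) : ℕ → ObjectProperty.FullSubcategory P
  | 0 => X₀
  | 1 => X₁
  | j + 2 => Xs j

def spliceHom {X₀ X₁ : ObjectProperty.FullSubcategory P}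
    {Xs : ℕ → ObjectProperty.FullSubcategory P}
    (f : X₁.obj ⟶ X₀.obj) (e : (Xs 0).obj ⟶ X₁.obj) (d : ∀ i, (Xs (i + 1)).obj ⟶ (Xs i).obj) :
    ∀ i, (spliceObj X₀ X₁ Xs (i + 1)).obj ⟶ (spliceObj X₀ X₁ Xs i).obj
  | 0 => f
  | 1 => e
  | j + 2 => d j

lemma homExact_spliceHom {X₀ X₁ : ObjectProperty.FullSubcategory P}
    {Xs : ℕ → ObjectProperty.FullSubcategory P} {f : X₁.obj ⟶ X₀.obj} {e : (Xs 0).obj ⟶ X₁.obj}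
    {d : ∀ i, (Xs (i + 1)).obj ⟶ (Xs i).obj} (hf : HomExact P e f) (he : HomExact P (d 0) e)
    (hd : ∀ j, HomExact P (d (j + 1)) (d j)) (i : ℕ) :
    HomExact P (spliceHom f e d (i + 1)) (spliceHom f e d i) := by
  rcases i with _ | _ | j
  exacts [hf, he, hd j]

end

theorem finPres_functors_have_finite_projective_dimension
    (hR : IsNoetherianRing Rᵐᵒᵖ)
    (hfg : ∀ M, P M → Module.Finite Rᵐᵒᵖ M)
    (hprj : ∀ M : ModuleCat.{0} Rᵐᵒᵖ, Module.Finite Rᵐᵒᵖ M →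
      Module.Projective Rᵐᵒᵖ M → P M)
    -- every finitely generated module has finite `X`-dimension:
    (hdim : ∀ M : ModuleCat.{0} Rᵐᵒᵖ, Module.Finite Rᵐᵒᵖ M →
      ∃ (n : ℕ) (Xs : ℕ → ModuleCat.{0} Rᵐᵒᵖ)
        (d : ∀ i, Xs (i + 1) ⟶ Xs i) (ε : Xs 0 ⟶ M),
        (∀ i ≤ n, P (Xs i)) ∧ (∀ i, n < i → Subsingleton (Xs i)) ∧
        -- exactness of `0 → X_n → ⋯ → X_0 → M → 0` ...
        Function.Surjective ε ∧
        LinearMap.range ((d 0).hom : Xs 1 →ₗ[Rᵐᵒᵖ] Xs 0) = LinearMap.ker (ε.hom : Xs 0 →ₗ[Rᵐᵒᵖ] M) ∧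
        (∀ i, LinearMap.range ((d (i + 1)).hom : Xs (i + 2) →ₗ[Rᵐᵒᵖ] Xs (i + 1)) =
          LinearMap.ker ((d i).hom : Xs (i + 1) →ₗ[Rᵐᵒᵖ] Xs i)) ∧
        -- ... which remains exact under `Hom_R(Z, −)` for every `Z ∈ X`:
        (∀ Z : ModuleCat.{0} Rᵐᵒᵖ, P Z →
          (∀ h : Z ⟶ M, ∃ g : Z ⟶ Xs 0, g ≫ ε = h) ∧
          (∀ g : Z ⟶ Xs 0, g ≫ ε = 0 → ∃ g' : Z ⟶ Xs 1, g' ≫ d 0 = g) ∧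
          (∀ i (g : Z ⟶ Xs (i + 1)), g ≫ d i = 0 →
            ∃ g' : Z ⟶ Xs (i + 2), g' ≫ d (i + 1) = g))) :
    -- then every `F` in `mod-X` has finite projective dimension in `mod-X`:
    ∀ F : (ObjectProperty.FullSubcategory P)ᵒᵖ ⥤ AddCommGrpCat.{0}, FinPres R P F →
      ∃ (m : ℕ) (Ys : ℕ → ObjectProperty.FullSubcategory P)
        (δ : ∀ i, yonP R P (Ys (i + 1)) ⟶ yonP R P (Ys i))
        (π : yonP R P (Ys 0) ⟶ F),
        (∀ i, m < i → ∀ A : ObjectProperty.FullSubcategory P,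
          Subsingleton ((yonP R P (Ys i)).obj (Opposite.op A))) ∧
        (∀ A : ObjectProperty.FullSubcategory P, Function.Surjective (π.app (Opposite.op A))) ∧
        (∀ (A : ObjectProperty.FullSubcategory P) (x : (yonP R P (Ys 0)).obj (Opposite.op A)),
          π.app (Opposite.op A) x = 0 ↔ ∃ y, (δ 0).app (Opposite.op A) y = x) ∧
        (∀ i (A : ObjectProperty.FullSubcategory P)
          (x : (yonP R P (Ys (i + 1))).obj (Opposite.op A)),
          (δ i).app (Opposite.op A) x = 0 ↔
            ∃ y, (δ (i + 1)).app (Opposite.op A) y = x) := by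
  rintro F ⟨X₁, X₀, α, π, w, ⟨hc⟩⟩
  obtain ⟨f, rfl⟩ := exists_eq_yonMap α
  have : Module.Finite Rᵐᵒᵖ X₁.obj := hfg _ X₁.property
  obtain ⟨n, Xs, d, ε, hXs, hXs_zero, -, hε, hd, hlift⟩ :=
    hdim (ModuleCat.of Rᵐᵒᵖ (LinearMap.ker f.hom)) inferInstance
  have hP (i : ℕ) : P (Xs i) := by
    rcases le_or_gt i n with hi | hi
    · exact hXs i hi
    · have := hXs_zero i hi
      exact hprj _ inferInstance inferInstance
  let Ys (i : ℕ) : ObjectProperty.FullSubcategory P := ⟨Xs i, hP i⟩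
  let g := spliceHom (Xs := Ys) f (ε ≫ ModuleCat.ofHom (LinearMap.ker f.hom).subtype) d
  have hg : ∀ i, HomExact P (g (i + 1)) (g i) := homExact_spliceHom
    (homExact_comp_subtype_ker f ε fun Z => (hlift Z.obj Z.property).1)
    ((homExact_of_range_eq_ker hε fun Z => (hlift Z.obj Z.property).2.1).comp_mono _)
    (fun j => homExact_of_range_eq_ker (hd j) fun Z => (hlift Z.obj Z.property).2.2 j)
  refine ⟨n + 2, spliceObj X₀ X₁ Ys, fun i => yonMap (g i), π, ?_,
    fun A => surjective_app_of_isCokernel hc _, fun A => app_eq_zero_iff_of_isCokernel hc _,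
    fun i A => hg i A⟩
  rintro (_ | _ | j) hj A
  · omega
  · omega
  · have : Subsingleton (Ys j).obj := hXs_zero j (by omega)
    exact subsingleton_yonP_obj (Y := Ys j) A
end
end

section
/- Let Q be a finite acyclic quiver, R a ring, and X a representation of Q over mod-R. Then there is a short exact sequence 0 → ⊕_{a ∈ Q₁} e^{t(a)}_λ(X_{s(a)}) → ⊕_{v ∈ Q₀} e^v_λ(X_v) → X → 0 in rep(Q, R), where the map to X is the family (f^v_X) corresponding to the identity of X_v under the adjunction Hom(e^v_λ(X_v), X) ≅ Hom_R(X_v, X_v). -/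
/-! **Statement 9.** Let `Q` be a finite acyclic quiver, `R` a ring, and `X` a
representation of `Q` over `mod-R`.  Then there is a short exact sequence
`0 → ⊕_{a ∈ Q₁} e^{t(a)}_λ(X_{s(a)}) → ⊕_{v ∈ Q₀} e^v_λ(X_v) → X → 0`
in `rep(Q, R)`, where the map to `X` is the family `(f^v_X)` corresponding to
the identity of `X_v` under the adjunction.

Representations are given concretely (right `R`-modules = `Rᵐᵒᵖ`-modules at each
vertex, linear maps for arrows); `e^v_λ(M)` has at `w` the direct sum
`⊕_{p ∈ Q(v,w)} M = (Path v w) →₀ M`; exactness is vertexwise. -/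

open scoped DirectSum Classical

noncomputable section

variable (A V : Type) [Ring A] [Quiver.{0} V]

/-- A representation of the quiver `V` by `A`-modules. -/
structure QRep where
  M : V → Type
  [acg : ∀ v, AddCommGroup (M v)]
  [mod : ∀ v, Module A (M v)]
  act : ∀ {a b : V}, (a ⟶ b) → (M a →ₗ[A] M b)

attribute [instance] QRep.acg QRep.mod

variable {A V}

/-- A morphism of representations. -/
structure QHom (D E : QRep A V) where
  app : ∀ v, D.M v →ₗ[A] E.M v
  natural : ∀ {a b : V} (e : a ⟶ b), (E.act e).comp (app a) = (app b).comp (D.act e)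

/-- The action of a path on a representation, by composing the actions of its
arrows. -/
def QRep.pact (D : QRep A V) : ∀ {a b : V}, Quiver.Path a b → (D.M a →ₗ[A] D.M b)
  | _, _, Quiver.Path.nil => LinearMap.id
  | _, _, Quiver.Path.cons p e => (D.act e).comp (D.pact p)

/-- The arrows of the quiver, as a sigma type. -/
abbrev Arr (V : Type) [Quiver.{0} V] : Type := Σ a b : V, a ⟶ b

/-- The middle term `⊕_{v ∈ Q₀} e^v_λ(X_v)` of the canonical sequence. -/
def midRep (X : QRep A V) : QRep A V where
  M := fun w => ⨁ (u : V), (Quiver.Path u w →₀ X.M u)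
  act := fun e => DirectSum.toModule A V _ fun u =>
    (DirectSum.lof A V (fun u' => Quiver.Path u' _ →₀ X.M u') u).comp
      (Finsupp.lmapDomain (X.M u) A (fun p => p.comp e.toPath))

/-- The left term `⊕_{a ∈ Q₁} e^{t(a)}_λ(X_{s(a)})` of the canonical
sequence. -/
def leftRep (X : QRep A V) : QRep A V where
  M := fun w => ⨁ (c : Arr V), (Quiver.Path c.2.1 w →₀ X.M c.1)
  act := fun e => DirectSum.toModule A (Arr V) _ fun c =>
    (DirectSum.lof A (Arr V) (fun c' => Quiver.Path c'.2.1 _ →₀ X.M c'.1) c).comp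
      (Finsupp.lmapDomain (X.M c.1) A (fun p => p.comp e.toPath))

/-- The canonical morphism `f_X : ⊕_{v ∈ Q₀} e^v_λ(X_v) → X`, whose `v`-th
component corresponds to the identity of `X_v` under the adjunction
`Hom(e^v_λ(X_v), X) ≅ Hom_R(X_v, X_v)`: on the path component `p : Q(u,w)` it
acts by `X.pact p`. -/
def canonicalEpi (X : QRep A V) (w : V) : (midRep X).M w →ₗ[A] X.M w :=
  DirectSum.toModule A V (X.M w) fun u =>
    Finsupp.lsum ℕ fun p : Quiver.Path u w => X.pact p

/-! The map `g` (`canonicalMono`) sends the generator `(a : u ⟶ v, p : v ⇝ w, m ∈ X_u)` to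
`(u, a·p, m) − (v, p, X_a m)`.  It is split by `σ` (`canonicalRetraction`), which sends
`(u, p, m)` to the sum, over all factorisations `p = q·a·r` through an arrow `a`, of
`(a, r, X_q m)`.  Then `σ ∘ g = id`, and `g ∘ σ + ι ∘ f_X = id` where `ι` puts `m ∈ X_w` on the
trivial path at `w`; together with `f_X ∘ g = 0` and `f_X ∘ ι = id` this gives exactness. -/

theorem LinearMap.range_eq_ker_of_comp_add_comp_eq_id {R L M N : Type*} [Ring R]
    [AddCommGroup L] [AddCommGroup M] [AddCommGroup N]
    [Module R L] [Module R M] [Module R N] {g : L →ₗ[R] M} {f : M →ₗ[R] N}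
    (σ : M →ₗ[R] L) (ι : N →ₗ[R] M) (hfg : f ∘ₗ g = 0)
    (hid : g ∘ₗ σ + ι ∘ₗ f = LinearMap.id) :
    LinearMap.range g = LinearMap.ker f := by
  refine le_antisymm (LinearMap.range_le_ker_iff.mpr hfg) fun x hx => ⟨σ x, ?_⟩
  have hx' : g (σ x) + ι (f x) = x := LinearMap.congr_fun hid x
  rwa [LinearMap.mem_ker.mp hx, map_zero, add_zero] at hx'

namespace QRep

variable (X : QRep A V)

@[simp]
theorem pact_nil {u : V} : X.pact (Quiver.Path.nil : Quiver.Path u u) = LinearMap.id := by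
  rw [QRep.pact]

@[simp]
theorem pact_cons {u v w : V} (p : Quiver.Path u v) (e : v ⟶ w) :
    X.pact (p.cons e) = X.act e ∘ₗ X.pact p := by
  rw [QRep.pact]

theorem pact_comp {u v w : V} (p : Quiver.Path u v) (q : Quiver.Path v w) :
    X.pact (p.comp q) = X.pact q ∘ₗ X.pact p := by
  induction q with
  | nil => rw [Quiver.Path.comp_nil, pact_nil, LinearMap.id_comp]
  | cons q e ih => rw [Quiver.Path.comp_cons, pact_cons, pact_cons, ih, LinearMap.comp_assoc]

theorem pact_toPath {u v : V} (e : u ⟶ v) : X.pact e.toPath = X.act e := by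
  rw [Quiver.Hom.toPath, pact_cons, pact_nil, LinearMap.comp_id]

theorem pact_toPath_comp {u v w : V} (e : u ⟶ v) (p : Quiver.Path v w) (m : X.M u) :
    X.pact (e.toPath.comp p) m = X.pact p (X.act e m) := by
  rw [pact_comp, LinearMap.comp_apply, pact_toPath]

end QRep

section Generators

variable (X : QRep A V)

def midRep.lsingle {u w : V} (p : Quiver.Path u w) : X.M u →ₗ[A] (midRep X).M w where
  toFun m := DirectSum.lof A V (fun u' => Quiver.Path u' w →₀ X.M u') u (Finsupp.single p m)
  map_add' := (DirectSum.lof A V (fun u' => Quiver.Path u' w →₀ X.M u') u ∘ₗ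
    Finsupp.lsingle p).map_add
  map_smul' := (DirectSum.lof A V (fun u' => Quiver.Path u' w →₀ X.M u') u ∘ₗ
    Finsupp.lsingle p).map_smul

def leftRep.lsingle (c : Arr V) {w : V} (p : Quiver.Path c.2.1 w) :
    X.M c.1 →ₗ[A] (leftRep X).M w where
  toFun m := DirectSum.lof A (Arr V) (fun c' => Quiver.Path c'.2.1 w →₀ X.M c'.1) c
    (Finsupp.single p m)
  map_add' := (DirectSum.lof A (Arr V) (fun c' => Quiver.Path c'.2.1 w →₀ X.M c'.1) c ∘ₗ
    Finsupp.lsingle p).map_add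
  map_smul' := (DirectSum.lof A (Arr V) (fun c' => Quiver.Path c'.2.1 w →₀ X.M c'.1) c ∘ₗ
    Finsupp.lsingle p).map_smul

variable {X}

theorem midRep.lsingle_apply {u w : V} (p : Quiver.Path u w) (m : X.M u) :
    midRep.lsingle X p m =
      DirectSum.lof A V (fun u' => Quiver.Path u' w →₀ X.M u') u (Finsupp.single p m) :=
  rfl

theorem leftRep.lsingle_apply (c : Arr V) {w : V} (p : Quiver.Path c.2.1 w) (m : X.M c.1) :
    leftRep.lsingle X c p m =
      DirectSum.lof A (Arr V) (fun c' => Quiver.Path c'.2.1 w →₀ X.M c'.1) c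
        (Finsupp.single p m) :=
  rfl

theorem midRep.hom_ext {N : Type*} [AddCommGroup N] [Module A N] {w : V}
    {f f' : (midRep X).M w →ₗ[A] N}
    (h : ∀ (u : V) (p : Quiver.Path u w) (m : X.M u),
      f (lsingle X p m) = f' (lsingle X p m)) :
    f = f' :=
  DirectSum.linearMap_ext _ fun u => Finsupp.lhom_ext (h u)

theorem leftRep.hom_ext {N : Type*} [AddCommGroup N] [Module A N] {w : V}
    {f f' : (leftRep X).M w →ₗ[A] N}
    (h : ∀ (c : Arr V) (p : Quiver.Path c.2.1 w) (m : X.M c.1),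
      f (lsingle X c p m) = f' (lsingle X c p m)) :
    f = f' :=
  DirectSum.linearMap_ext _ fun c => Finsupp.lhom_ext (h c)

theorem midRep.act_lsingle {u v w : V} (e : v ⟶ w) (p : Quiver.Path u v) (m : X.M u) :
    (midRep X).act e (lsingle X p m) = lsingle X (p.cons e) m := by
  rw [lsingle_apply, lsingle_apply]
  dsimp only [midRep]
  -- re-elaborating puts the direct-sum instances in place of `(midRep X).mod`, so `rw` can match
  show DirectSum.toModule A V _ _ _ = _
  rw [DirectSum.toModule_lof, LinearMap.comp_apply, Finsupp.lmapDomain_apply,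
    Finsupp.mapDomain_single]
  rfl

theorem leftRep.act_lsingle {v w : V} (e : v ⟶ w) (c : Arr V) (p : Quiver.Path c.2.1 v)
    (m : X.M c.1) :
    (leftRep X).act e (lsingle X c p m) = lsingle X c (p.cons e) m := by
  rw [lsingle_apply, lsingle_apply]
  dsimp only [leftRep]
  show DirectSum.toModule A (Arr V) _ _ _ = _
  rw [DirectSum.toModule_lof, LinearMap.comp_apply, Finsupp.lmapDomain_apply,
    Finsupp.mapDomain_single]
  rfl

theorem canonicalEpi_lsingle {u w : V} (p : Quiver.Path u w) (m : X.M u) :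
    canonicalEpi X w (midRep.lsingle X p m) = X.pact p m := by
  rw [midRep.lsingle_apply]
  dsimp only [canonicalEpi]
  show DirectSum.toModule A V _ _ _ = _
  rw [DirectSum.toModule_lof, Finsupp.lsum_single]

end Generators

section Resolution

variable (X : QRep A V)

def canonicalMonoApp (w : V) : (leftRep X).M w →ₗ[A] (midRep X).M w :=
  DirectSum.toModule A (Arr V) _ fun c => Finsupp.lsum ℕ fun p : Quiver.Path c.2.1 w =>
    midRep.lsingle X (c.2.2.toPath.comp p) - midRep.lsingle X p ∘ₗ X.act c.2.2

def pathRetraction : ∀ {u w : V}, Quiver.Path u w → (X.M u →ₗ[A] (leftRep X).M w)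
  | _, _, .nil => 0
  | _, _, .cons q e =>
    (leftRep X).act e ∘ₗ pathRetraction q + leftRep.lsingle X ⟨_, _, e⟩ .nil ∘ₗ X.pact q

def canonicalRetraction (w : V) : (midRep X).M w →ₗ[A] (leftRep X).M w :=
  DirectSum.toModule A V _ fun _ => Finsupp.lsum ℕ fun p => pathRetraction X p

variable {X}

theorem canonicalMonoApp_lsingle (c : Arr V) {w : V} (p : Quiver.Path c.2.1 w) (m : X.M c.1) :
    canonicalMonoApp X w (leftRep.lsingle X c p m) =
      midRep.lsingle X (c.2.2.toPath.comp p) m - midRep.lsingle X p (X.act c.2.2 m) := by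
  rw [leftRep.lsingle_apply]
  dsimp only [canonicalMonoApp]
  show DirectSum.toModule A (Arr V) _ _ _ = _
  rw [DirectSum.toModule_lof, Finsupp.lsum_single]
  rfl

theorem canonicalRetraction_lsingle {u w : V} (p : Quiver.Path u w) (m : X.M u) :
    canonicalRetraction X w (midRep.lsingle X p m) = pathRetraction X p m := by
  rw [midRep.lsingle_apply]
  dsimp only [canonicalRetraction]
  show DirectSum.toModule A V _ _ _ = _
  rw [DirectSum.toModule_lof, Finsupp.lsum_single]

theorem canonicalMonoApp_natural {v w : V} (e : v ⟶ w) :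
    (midRep X).act e ∘ₗ canonicalMonoApp X v =
      canonicalMonoApp X w ∘ₗ (leftRep X).act e := by
  refine leftRep.hom_ext fun c p m => ?_
  simp only [LinearMap.comp_apply, canonicalMonoApp_lsingle, map_sub, midRep.act_lsingle,
    leftRep.act_lsingle, Quiver.Path.comp_cons]

variable (X) in
def canonicalMono : QHom (leftRep X) (midRep X) :=
  ⟨canonicalMonoApp X, canonicalMonoApp_natural⟩

theorem canonicalEpi_natural {v w : V} (e : v ⟶ w) :
    X.act e ∘ₗ canonicalEpi X v = canonicalEpi X w ∘ₗ (midRep X).act e := by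
  refine midRep.hom_ext fun u p m => ?_
  simp only [LinearMap.comp_apply, canonicalEpi_lsingle, midRep.act_lsingle, QRep.pact_cons]

theorem canonicalEpi_comp_canonicalMonoApp (w : V) :
    canonicalEpi X w ∘ₗ canonicalMonoApp X w = 0 := by
  refine leftRep.hom_ext fun c p m => ?_
  rw [LinearMap.comp_apply, canonicalMonoApp_lsingle, map_sub, canonicalEpi_lsingle,
    canonicalEpi_lsingle, QRep.pact_toPath_comp, sub_self, LinearMap.zero_apply]

theorem canonicalEpi_comp_lsingle_nil (w : V) :
    canonicalEpi X w ∘ₗ midRep.lsingle X Quiver.Path.nil = LinearMap.id := by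
  ext m
  rw [LinearMap.comp_apply, canonicalEpi_lsingle, QRep.pact_nil]

theorem pathRetraction_nil {u : V} :
    pathRetraction X (Quiver.Path.nil : Quiver.Path u u) = 0 := by
  rw [pathRetraction]

theorem pathRetraction_cons {u v w : V} (q : Quiver.Path u v) (e : v ⟶ w) :
    pathRetraction X (q.cons e) =
      (leftRep X).act e ∘ₗ pathRetraction X q +
        leftRep.lsingle X ⟨v, w, e⟩ .nil ∘ₗ X.pact q := by
  rw [pathRetraction]

theorem pathRetraction_toPath_comp {u v w : V} (e : u ⟶ v) (p : Quiver.Path v w) (m : X.M u) :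
    pathRetraction X (e.toPath.comp p) m =
      leftRep.lsingle X ⟨u, v, e⟩ p m + pathRetraction X p (X.act e m) := by
  induction p with
  | nil =>
    rw [Quiver.Path.comp_nil, Quiver.Hom.toPath, pathRetraction_cons, pathRetraction_nil,
      pathRetraction_nil, LinearMap.comp_zero, zero_add, QRep.pact_nil, LinearMap.comp_id,
      LinearMap.zero_apply, add_zero]
  | cons p f ih =>
    simp only [Quiver.Path.comp_cons, pathRetraction_cons, LinearMap.add_apply,
      LinearMap.comp_apply, ih, map_add, leftRep.act_lsingle f ⟨u, v, e⟩, QRep.pact_toPath_comp]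
    abel

theorem canonicalMonoApp_pathRetraction {u w : V} (p : Quiver.Path u w) (m : X.M u) :
    canonicalMonoApp X w (pathRetraction X p m) =
      midRep.lsingle X p m - midRep.lsingle X .nil (X.pact p m) := by
  induction p with
  | nil => rw [pathRetraction_nil, LinearMap.zero_apply, map_zero, QRep.pact_nil,
      LinearMap.id_apply, sub_self]
  | cons p e ih =>
    rw [pathRetraction_cons, LinearMap.add_apply, LinearMap.comp_apply, LinearMap.comp_apply,
      map_add, ← LinearMap.comp_apply (canonicalMonoApp X _), ← canonicalMonoApp_natural,
      LinearMap.comp_apply, ih, canonicalMonoApp_lsingle, map_sub, midRep.act_lsingle,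
      midRep.act_lsingle, QRep.pact_cons, LinearMap.comp_apply, Quiver.Path.comp_nil]
    exact sub_add_sub_cancel _ _ _

theorem canonicalRetraction_comp_canonicalMonoApp (w : V) :
    canonicalRetraction X w ∘ₗ canonicalMonoApp X w = LinearMap.id := by
  refine leftRep.hom_ext fun ⟨a, b, e⟩ p m => ?_
  rw [LinearMap.comp_apply, canonicalMonoApp_lsingle, map_sub, canonicalRetraction_lsingle,
    canonicalRetraction_lsingle, pathRetraction_toPath_comp, add_sub_cancel_right,
    LinearMap.id_apply]

theorem canonicalMonoApp_comp_canonicalRetraction_add_eq_id (w : V) :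
    canonicalMonoApp X w ∘ₗ canonicalRetraction X w +
      midRep.lsingle X .nil ∘ₗ canonicalEpi X w = LinearMap.id := by
  refine midRep.hom_ext fun u p m => ?_
  rw [LinearMap.add_apply, LinearMap.comp_apply, LinearMap.comp_apply,
    canonicalRetraction_lsingle, canonicalMonoApp_pathRetraction, canonicalEpi_lsingle,
    sub_add_cancel, LinearMap.id_apply]

end Resolution

theorem canonical_short_exact_sequence
    [Fintype V] [∀ a b : V, Fintype (a ⟶ b)]
    (hacyclic : ∀ (v : V) (p : Quiver.Path v v), p = Quiver.Path.nil)
    (X : QRep A V) :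
    -- `f_X` is a morphism of representations ...
    (∀ {a b : V} (e : a ⟶ b),
      (X.act e).comp (canonicalEpi X a) = (canonicalEpi X b).comp ((midRep X).act e)) ∧
    -- ... and there is an injection from `⊕_{a ∈ Q₁} e^{t(a)}_λ(X_{s(a)})`
    -- completing it to a vertexwise short exact sequence.
    (∃ g : QHom (leftRep X) (midRep X),
      (∀ w, Function.Injective (g.app w)) ∧
      (∀ w, Function.Surjective (canonicalEpi X w)) ∧
      (∀ w, LinearMap.range (g.app w) = LinearMap.ker (canonicalEpi X w))) := by
  refine ⟨canonicalEpi_natural, canonicalMono X, fun w => ?_, fun w => ?_, fun w => ?_⟩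
  · exact LinearMap.injective_of_comp_eq_id _ _ (canonicalRetraction_comp_canonicalMonoApp w)
  · exact LinearMap.surjective_of_comp_eq_id _ _ (canonicalEpi_comp_lsingle_nil w)
  · exact LinearMap.range_eq_ker_of_comp_add_comp_eq_id _ _
      (canonicalEpi_comp_canonicalMonoApp w) (canonicalMonoApp_comp_canonicalRetraction_add_eq_id w)

end
end

section
/- Let T = [[R, 0], [M, S]] be a triangular matrix ring and M(T) the subcategory of mod-T of modules (X,Y)_f such that f: Y ⊗_S M → X is a split monomorphism. Then M(T) is contravariantly finite in mod-T, and every T-module (X,Y)_f admits an exact sequence 0 → K → C → (X,Y)_f → 0 with C, K ∈ M(T) that stays exact under Hom_T(Z, −) for all Z ∈ M(T); in particular the global M(T)-dimension of T is at most one. -/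
/-! **Statement 13.** Let `T = [[R,0],[M,S]]` be a triangular matrix ring and
`M(T)` the subcategory of `mod-T` of modules `(X,Y)_f` such that
`f : Y ⊗_S M → X` is a split monomorphism.  Then `M(T)` is contravariantly
finite in `mod-T`, and every `T`-module `(X,Y)_f` admits an exact sequence
`0 → K → C → (X,Y)_f → 0` with `C, K ∈ M(T)` which stays exact under
`Hom_T(Z, −)` for all `Z ∈ M(T)`; in particular the global `M(T)`-dimension of
`T` is at most one.

`T`-modules are triples `(X, Y, f)` where the tensor product `Y ⊗_S M` is
realized by a type `T` with a universal balanced bi-additive map `tp`; a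
morphism is a pair of linear maps together with the induced map of realizations
commuting with the structure maps; exactness is componentwise. -/

universe u

section
variable (R S M : Type u) [Ring R] [Ring S] [AddCommGroup M]
  [Module S M] [Module Rᵐᵒᵖ M] [SMulCommClass S Rᵐᵒᵖ M]

/-- A right `T`-module `(X, Y)_f`, together with a chosen realization `T` of
the tensor product `Y ⊗_S M`. -/
structure TMod where
  X : Type u
  [ax : AddCommGroup X]
  [mx : Module Rᵐᵒᵖ X]
  Y : Type u
  [ay : AddCommGroup Y]
  [my : Module Sᵐᵒᵖ Y]
  T : Type u
  [aT : AddCommGroup T]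
  [mT : Module Rᵐᵒᵖ T]
  tp : Y → M → T
  tp_add_left : ∀ y y' m, tp (y + y') m = tp y m + tp y' m
  tp_add_right : ∀ y m m', tp y (m + m') = tp y m + tp y m'
  tp_balanced : ∀ (s : S) y m, tp (MulOpposite.op s • y) m = tp y (s • m)
  tp_smul : ∀ (r : Rᵐᵒᵖ) y m, tp y (r • m) = r • tp y m
  tp_universal : ∀ (A : Type u) [AddCommGroup A] (h : Y → M → A),
    (∀ y y' m, h (y + y') m = h y m + h y' m) →
    (∀ y m m', h y (m + m') = h y m + h y m') →
    (∀ (s : S) y m, h (MulOpposite.op s • y) m = h y (s • m)) →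
    ∃! g : T →+ A, ∀ y m, g (tp y m) = h y m
  f : T →ₗ[Rᵐᵒᵖ] X

attribute [instance] TMod.ax TMod.mx TMod.ay TMod.my TMod.aT TMod.mT

variable {R S M}

/-- A morphism of `T`-modules: a pair `(φX, φY)` with `f₂ ∘ (φY ⊗ M) = φX ∘ f₁`,
the map `φY ⊗ M` of realizations being recorded as `φT`. -/
structure THom (N₁ N₂ : TMod R S M) where
  φX : N₁.X →ₗ[Rᵐᵒᵖ] N₂.X
  φY : N₁.Y →ₗ[Sᵐᵒᵖ] N₂.Y
  φT : N₁.T →+ N₂.T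
  φT_tp : ∀ y m, φT (N₁.tp y m) = N₂.tp (φY y) m
  comm : ∀ t, φX (N₁.f t) = N₂.f (φT t)

/-- `N` belongs to `M(T)`: the structure map `f : Y ⊗_S M → X` is a split
monomorphism. -/
def MemMT (N : TMod R S M) : Prop :=
  ∃ r : N.X →ₗ[Rᵐᵒᵖ] N.T, ∀ t, r (N.f t) = t

end

/-! The cover of `N = (X, Y)_f` is `C = e¹(X) ⊕ e²(Y) = (X ⊕ Y ⊗ M, Y)` with structure map the
inclusion of `Y ⊗ M`, mapped onto `N` by `(x, t) ↦ x + f t`. Its kernel is `e¹(Y ⊗ M)`, embedded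
by `t ↦ (-f t, t)`. A morphism `h` from `D ∈ M(T)` with retraction `r` lifts to `C` as
`x ↦ (h x - f (h (r x)), h (r x))`; and a morphism into `C` killed by the projection has zero
`Y`-component, hence zero `Y ⊗ M`-component, so it lands in the kernel. -/

section

variable {R S M : Type u} [Ring R] [Ring S] [AddCommGroup M] [Module S M] [Module Rᵐᵒᵖ M]

namespace TMod

variable (N : TMod R S M)

theorem tp_zero_left (m : M) : N.tp 0 m = 0 := by
  have h := N.tp_add_left 0 0 m
  rw [add_zero] at h
  exact left_eq_add.mp h

variable {N} in
theorem addMonoidHom_ext {A : Type u} [AddCommGroup A] {g₁ g₂ : N.T →+ A}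
    (h : ∀ y m, g₁ (N.tp y m) = g₂ (N.tp y m)) : g₁ = g₂ :=
  (N.tp_universal A (fun y m => g₁ (N.tp y m))
    (fun y y' m => by simp only [N.tp_add_left, map_add])
    (fun y m m' => by simp only [N.tp_add_right, map_add])
    (fun s y m => by rw [N.tp_balanced])).unique (fun _ _ => rfl) fun y m => (h y m).symm

def e₁ (X : Type u) [AddCommGroup X] [Module Rᵐᵒᵖ X] : TMod R S M where
  X := X
  Y := PUnit
  T := PUnit
  tp _ _ := PUnit.unit
  tp_add_left _ _ _ := rfl
  tp_add_right _ _ _ := rfl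
  tp_balanced _ _ _ := rfl
  tp_smul _ _ _ := rfl
  tp_universal A _ h h_add _ _ := by
    refine ⟨0, fun y m => ?_, fun g _ => Subsingleton.elim g 0⟩
    exact (by simpa using h_add y y m : h y m = 0).symm
  f := 0

theorem memMT_e₁ (X : Type u) [AddCommGroup X] [Module Rᵐᵒᵖ X] :
    MemMT (e₁ (R := R) (S := S) (M := M) X) :=
  ⟨0, fun _ => rfl⟩

def cover : TMod R S M where
  X := N.X × N.T
  Y := N.Y
  T := N.T
  tp := N.tp
  tp_add_left := N.tp_add_left
  tp_add_right := N.tp_add_right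
  tp_balanced := N.tp_balanced
  tp_smul := N.tp_smul
  tp_universal := N.tp_universal
  f := LinearMap.inr Rᵐᵒᵖ N.X N.T

theorem memMT_cover : MemMT N.cover :=
  ⟨LinearMap.snd Rᵐᵒᵖ N.X N.T, fun _ => rfl⟩

end TMod

namespace THom

variable {N₁ N₂ : TMod R S M} (φ : THom N₁ N₂)

theorem φT_smul (r : Rᵐᵒᵖ) (t : N₁.T) : φ.φT (r • t) = r • φ.φT t := by
  have key : φ.φT.comp (DistribSMul.toAddMonoidHom N₁.T r) =
      (DistribSMul.toAddMonoidHom N₂.T r).comp φ.φT :=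
    TMod.addMonoidHom_ext fun y m => by
      simp only [AddMonoidHom.comp_apply, DistribSMul.toAddMonoidHom_apply]
      rw [← N₁.tp_smul, φ.φT_tp, φ.φT_tp, N₂.tp_smul]
  exact DFunLike.congr_fun key t

def φTₗ : N₁.T →ₗ[Rᵐᵒᵖ] N₂.T :=
  { φ.φT with map_smul' := φ.φT_smul }

theorem φT_eq_zero_of_φY_eq_zero (h : ∀ y, φ.φY y = 0) : φ.φT = 0 :=
  TMod.addMonoidHom_ext fun y m => by rw [φ.φT_tp, h, N₂.tp_zero_left, AddMonoidHom.zero_apply]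

end THom

namespace TMod

variable (N : TMod R S M)

def coverπ : THom N.cover N where
  φX := LinearMap.fst Rᵐᵒᵖ N.X N.T + N.f ∘ₗ LinearMap.snd Rᵐᵒᵖ N.X N.T
  φY := LinearMap.id
  φT := AddMonoidHom.id N.T
  φT_tp _ _ := rfl
  comm t := zero_add (N.f t)

def coverι : THom (e₁ N.T) N.cover where
  φX := LinearMap.prod (-N.f) LinearMap.id
  φY := 0
  φT := 0
  φT_tp _ m := (N.tp_zero_left m).symm
  comm _ := by
    change ((-N.f) 0, (0 : N.T)) = (0, 0)
    rw [map_zero]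

theorem coverπ_φX_apply (x : N.X) (t : N.T) : N.coverπ.φX (x, t) = x + N.f t := rfl

theorem coverι_φX_apply (t : N.T) : N.coverι.φX t = (-N.f t, t) := rfl

theorem coverι_φX_injective : Function.Injective N.coverι.φX :=
  fun _ _ h => congrArg Prod.snd h

theorem coverι_φY_injective : Function.Injective N.coverι.φY :=
  fun _ _ _ => rfl

theorem coverπ_φX_surjective : Function.Surjective N.coverπ.φX :=
  fun x => ⟨(x, 0), by rw [coverπ_φX_apply, map_zero, add_zero]⟩

theorem coverπ_φY_surjective : Function.Surjective N.coverπ.φY :=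
  Function.surjective_id

theorem coverπ_φX_eq_zero_iff (x : N.cover.X) :
    N.coverπ.φX x = 0 ↔ ∃ k, N.coverι.φX k = x := by
  obtain ⟨x, t⟩ := x
  rw [coverπ_φX_apply]
  constructor
  · intro hx
    exact ⟨t, by rw [coverι_φX_apply, neg_eq_of_add_eq_zero_left hx]⟩
  · rintro ⟨k, hk⟩
    obtain ⟨rfl, rfl⟩ := Prod.mk.inj (show (-N.f k, k) = (x, t) from hk)
    exact neg_add_cancel _

theorem coverπ_φY_eq_zero_iff (y : N.cover.Y) :
    N.coverπ.φY y = 0 ↔ ∃ k, N.coverι.φY k = y :=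
  ⟨fun hy => ⟨PUnit.unit, hy.symm⟩, fun ⟨_, hk⟩ => hk.symm⟩

theorem exists_lift_through_coverπ {D : TMod R S M} (hD : MemMT D) (h : THom D N) :
    ∃ u : THom D N.cover,
      (∀ x, N.coverπ.φX (u.φX x) = h.φX x) ∧ ∀ y, N.coverπ.φY (u.φY y) = h.φY y := by
  obtain ⟨r, hr⟩ := hD
  let s : D.X →ₗ[Rᵐᵒᵖ] N.T := h.φTₗ ∘ₗ r
  refine ⟨{ φX := LinearMap.prod (h.φX - N.f ∘ₗ s) s
            φY := h.φY
            φT := h.φT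
            φT_tp := h.φT_tp
            comm := fun t => ?_ }, fun x => ?_, fun _ => rfl⟩
  · have hs : s (D.f t) = h.φT t := congrArg h.φT (hr t)
    change (h.φX (D.f t) - N.f (s (D.f t)), s (D.f t)) = (0, h.φT t)
    rw [hs, h.comm, sub_self]
  · exact sub_add_cancel (h.φX x) (N.f (s x))

theorem exists_lift_through_coverι {D : TMod R S M} (u : THom D N.cover)
    (hX : ∀ x, N.coverπ.φX (u.φX x) = 0) (hY : ∀ y, N.coverπ.φY (u.φY y) = 0) :
    ∃ w : THom D (e₁ N.T),
      (∀ x, N.coverι.φX (w.φX x) = u.φX x) ∧ ∀ y, N.coverι.φY (w.φY y) = u.φY y := by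
  refine ⟨{ φX := LinearMap.snd Rᵐᵒᵖ N.X N.T ∘ₗ u.φX
            φY := 0
            φT := 0
            φT_tp := fun _ _ => rfl
            comm := fun t => ?_ }, fun x => ?_, fun y => (hY y).symm⟩
  · change (u.φX (D.f t)).2 = 0
    rw [u.comm, u.φT_eq_zero_of_φY_eq_zero hY]
    rfl
  · obtain ⟨k, hk⟩ := (N.coverπ_φX_eq_zero_iff (u.φX x)).mp (hX x)
    change N.coverι.φX (u.φX x).2 = u.φX x
    rw [← hk]
    rfl

end TMod

end

section
variable (R S M : Type u) [Ring R] [Ring S] [AddCommGroup M]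
  [Module S M] [Module Rᵐᵒᵖ M] [SMulCommClass S Rᵐᵒᵖ M]

variable {R S M}

theorem MT_contravariantly_finite_and_dimension_le_one_general
    (N : TMod R S M) :
    ∃ (C K : TMod R S M), MemMT C ∧ MemMT K ∧
      ∃ (ι : THom K C) (π : THom C N),
        -- `0 → K → C → N → 0` is a short exact sequence (componentwise):
        Function.Injective ι.φX ∧ Function.Injective ι.φY ∧
        Function.Surjective π.φX ∧ Function.Surjective π.φY ∧
        (∀ x : C.X, π.φX x = 0 ↔ ∃ k, ι.φX k = x) ∧
        (∀ y : C.Y, π.φY y = 0 ↔ ∃ k, ι.φY k = y) ∧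
        -- `π` is a right `M(T)`-approximation: every morphism from an object
        -- of `M(T)` factors through `π` ...
        (∀ D : TMod R S M, MemMT D → ∀ h : THom D N, ∃ u : THom D C,
          (∀ x, π.φX (u.φX x) = h.φX x) ∧ (∀ y, π.φY (u.φY y) = h.φY y)) ∧
        -- ... and the sequence stays exact under `Hom_T(Z,−)` for `Z ∈ M(T)`:
        (∀ D : TMod R S M, MemMT D → ∀ u : THom D C,
          (∀ x, π.φX (u.φX x) = 0) → (∀ y, π.φY (u.φY y) = 0) →
          ∃ w : THom D K,
            (∀ x, ι.φX (w.φX x) = u.φX x) ∧ (∀ y, ι.φY (w.φY y) = u.φY y)) :=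
  ⟨N.cover, TMod.e₁ N.T, N.memMT_cover, TMod.memMT_e₁ N.T, N.coverι, N.coverπ,
    N.coverι_φX_injective, N.coverι_φY_injective,
    N.coverπ_φX_surjective, N.coverπ_φY_surjective,
    N.coverπ_φX_eq_zero_iff, N.coverπ_φY_eq_zero_iff,
    fun _ hD => N.exists_lift_through_coverπ hD, fun _ _ => N.exists_lift_through_coverι⟩

theorem MT_contravariantly_finite_and_dimension_le_one
    (hR : IsNoetherianRing Rᵐᵒᵖ) (hS : IsNoetherianRing Sᵐᵒᵖ)
    (hM : Module.Finite Rᵐᵒᵖ M)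
    (N : TMod R S M)
    (hNX : Module.Finite Rᵐᵒᵖ N.X) (hNY : Module.Finite Sᵐᵒᵖ N.Y) :
    ∃ (C K : TMod R S M), MemMT C ∧ MemMT K ∧
      ∃ (ι : THom K C) (π : THom C N),
        -- `0 → K → C → N → 0` is a short exact sequence (componentwise):
        Function.Injective ι.φX ∧ Function.Injective ι.φY ∧
        Function.Surjective π.φX ∧ Function.Surjective π.φY ∧
        (∀ x : C.X, π.φX x = 0 ↔ ∃ k, ι.φX k = x) ∧
        (∀ y : C.Y, π.φY y = 0 ↔ ∃ k, ι.φY k = y) ∧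
        -- `π` is a right `M(T)`-approximation: every morphism from an object
        -- of `M(T)` factors through `π` ...
        (∀ D : TMod R S M, MemMT D → ∀ h : THom D N, ∃ u : THom D C,
          (∀ x, π.φX (u.φX x) = h.φX x) ∧ (∀ y, π.φY (u.φY y) = h.φY y)) ∧
        -- ... and the sequence stays exact under `Hom_T(Z,−)` for `Z ∈ M(T)`:
        (∀ D : TMod R S M, MemMT D → ∀ u : THom D C,
          (∀ x, π.φX (u.φX x) = 0) → (∀ y, π.φY (u.φY y) = 0) →
          ∃ w : THom D K,
            (∀ x, ι.φX (w.φX x) = u.φX x) ∧ (∀ y, ι.φY (w.φY y) = u.φY y)) :=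
  MT_contravariantly_finite_and_dimension_le_one_general N

end
end

section
/- Let R be a ring and M a nilpotent R-R-bimodule. For every module (X, u) over the tensor ring T_R(M) there is a short exact sequence of T_R(M)-modules 0 → (Ind(X⊗_R M), c_{X⊗M}) → (Ind(X), c_X) → (X, u) → 0, where the surjection restricted to X⊗M^{⊗i} is u composed i times. -/
/-! Iterated tensors `x ⊗ m₁ ⊗ ⋯ ⊗ mₖ` generate `X ⊗ M^{⊗k}`, and in degree `n + 1` they are
balanced multiadditive in the `mᵢ`, hence vanish by nilpotency: the top term
`X ⊗ M^{⊗(n+1)}` is zero. Checking on generators, `u^k ∘ (u ⊗ M^{⊗k}) = u^{k+1}`, so `φ ∘ ψ`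
telescopes to the top term. `ψ` is injective by descending induction on the degree. For
`w ∈ ker φ`, solving `ψ z = w` from the top degree down leaves a discrepancy `d` in degree `0`
only, with `φ d = φ w = 0`; as `φ` is the isomorphism `X ⊗ M^{⊗0} ≅ X` there, `d = 0`. -/

theorem pairing_hom_ext {R M Q Q' : Type} [Ring R] [AddCommGroup M] [Module R M]
    [AddCommGroup Q] [Module Rᵐᵒᵖ Q] [AddCommGroup Q'] {t : Q → M → Q'}
    (add_left : ∀ p p' m, t (p + p') m = t p m + t p' m)
    (add_right : ∀ p m m', t p (m + m') = t p m + t p m')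
    (balanced : ∀ (r : R) p m, t (MulOpposite.op r • p) m = t p (r • m))
    (universal : ∀ (A : Type) [AddCommGroup A] (h : Q → M → A),
      (∀ p p' m, h (p + p') m = h p m + h p' m) →
      (∀ p m m', h p (m + m') = h p m + h p m') →
      (∀ (r : R) p m, h (MulOpposite.op r • p) m = h p (r • m)) →
      ∃! g : Q' →+ A, ∀ p m, g (t p m) = h p m)
    {A : Type} [AddCommGroup A] {f g : Q' →+ A} (hfg : ∀ p m, f (t p m) = g (t p m)) :
    f = g :=
  (universal A (fun p m => f (t p m)) (by simp [add_left]) (by simp [add_right])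
    (by simp [balanced])).unique (fun _ _ => rfl) (fun p m => (hfg p m).symm)

section TensorTower

variable {R M : Type} [Ring R] {P : ℕ → Type} [∀ i, AddCommGroup (P i)]
  [∀ i, Module Rᵐᵒᵖ (P i)] (tp : ∀ i, P i → M → P (i + 1))

def tensorWord : (k : ℕ) → P 0 → (Fin k → M) → P k
  | 0, p, _ => p
  | k + 1, p, v => tp k (tensorWord k p (Fin.init v)) (v (Fin.last k))

theorem tensorWord_hom_ext (add_left : ∀ i p p' m, tp i (p + p') m = tp i p m + tp i p' m)
    (hext : ∀ i (A : Type) [AddCommGroup A] (f g : P (i + 1) →+ A),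
      (∀ p m, f (tp i p m) = g (tp i p m)) → f = g)
    {k : ℕ} {A : Type} [AddCommGroup A] {f g : P k →+ A}
    (hfg : ∀ p v, f (tensorWord tp k p v) = g (tensorWord tp k p v)) : f = g := by
  induction k with
  | zero => ext p; exact hfg p Fin.elim0
  | succ k ih =>
    refine hext k A f g fun q m => ?_
    let tpm : P k →+ P (k + 1) := AddMonoidHom.mk' (tp k · m) (add_left k · · m)
    have : f.comp tpm = g.comp tpm :=
      ih fun p v => by simpa [tensorWord, tpm] using hfg p (Fin.snoc v m)
    exact DFunLike.congr_fun this q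

theorem V_apply_U {X : Type} [AddCommGroup X] [Module Rᵐᵒᵖ X]
    {e0 : P 0 ≃ₗ[Rᵐᵒᵖ] X} {U : ∀ i, P (i + 1) →ₗ[Rᵐᵒᵖ] P i} {V : ∀ i, P i →ₗ[Rᵐᵒᵖ] X}
    {γX : X → M → X}
    (hext : ∀ i (A : Type) [AddCommGroup A] (f g : P (i + 1) →+ A),
      (∀ p m, f (tp i p m) = g (tp i p m)) → f = g)
    (hU0 : ∀ p m, U 0 (tp 0 p m) = e0.symm (γX (e0 p) m))
    (hUsucc : ∀ i p m, U (i + 1) (tp (i + 1) p m) = tp i (U i p) m)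
    (hV0 : ∀ p, V 0 p = e0 p)
    (hVsucc : ∀ i p m, V (i + 1) (tp i p m) = γX (V i p) m) (k : ℕ) (p : P (k + 1)) :
    V k (U k p) = V (k + 1) p := by
  have on_generators : ∀ k, (∀ p m, V k (U k (tp k p m)) = V (k + 1) (tp k p m)) →
      ∀ p, V k (U k p) = V (k + 1) p := fun k h =>
    DFunLike.congr_fun (hext k X ((V k).comp (U k)).toAddMonoidHom (V (k + 1)).toAddMonoidHom h)
  induction k with
  | zero => exact on_generators 0 (by simp [hU0, hV0, hVsucc]) p
  | succ k ih => exact on_generators (k + 1) (by simp [hUsucc, hVsucc, ih]) p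

variable [AddCommGroup M]

theorem tensorWord_update_add (add_left : ∀ i p p' m, tp i (p + p') m = tp i p m + tp i p' m)
    (add_right : ∀ i p m m', tp i p (m + m') = tp i p m + tp i p m') {k : ℕ} (p : P 0)
    (v : Fin k → M) (i : Fin k) (m m' : M) :
    tensorWord tp k p (Function.update v i (m + m')) =
      tensorWord tp k p (Function.update v i m) + tensorWord tp k p (Function.update v i m') := by
  induction k with
  | zero => exact i.elim0
  | succ k ih =>
    induction i using Fin.lastCases with
    | last => simp [tensorWord, Fin.init_update_last, add_right]
    | cast j =>
      simp [tensorWord, Fin.init_update_castSucc,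
        Function.update_of_ne (Fin.castSucc_lt_last j).ne', ih, add_left]

variable [Module R M] [Module Rᵐᵒᵖ M]

theorem tensorWord_update_balanced
    (balanced : ∀ i (r : R) p m, tp i (MulOpposite.op r • p) m = tp i p (r • m))
    (smul : ∀ i (r : Rᵐᵒᵖ) p m, tp i p (r • m) = r • tp i p m) {k : ℕ} (p : P 0)
    (v : Fin (k + 1) → M) (i : Fin k) (r : R) :
    tensorWord tp (k + 1) p (Function.update v i.castSucc (MulOpposite.op r • v i.castSucc)) =
      tensorWord tp (k + 1) p (Function.update v i.succ (r • v i.succ)) := by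
  induction k with
  | zero => exact i.elim0
  | succ k ih =>
    induction i using Fin.lastCases with
    | last =>
      simp [tensorWord, Fin.init_update_last, Fin.init_update_castSucc, smul, ← balanced,
        Function.update_of_ne (Fin.castSucc_lt_last _).ne', Fin.init]
    | cast j =>
      simp only [tensorWord.eq_2 (k := k + 1)]
      rw [Fin.succ_castSucc, Fin.init_update_castSucc, Fin.init_update_castSucc,
        Function.update_of_ne (Fin.castSucc_lt_last _).ne',
        Function.update_of_ne (Fin.castSucc_lt_last _).ne']
      exact congrArg (tp (k + 1) · _) (ih (Fin.init v) j)

theorem subsingleton_of_nilpotent (n : ℕ)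
    (hnil : ∀ (A : Type) [AddCommGroup A] (f : (Fin (n + 1) → M) → A),
      (∀ (v : Fin (n + 1) → M) (i : Fin (n + 1)) (m m' : M),
        f (Function.update v i (m + m')) =
          f (Function.update v i m) + f (Function.update v i m')) →
      (∀ (v : Fin (n + 1) → M) (i : Fin n) (r : R),
        f (Function.update v i.castSucc (MulOpposite.op r • v i.castSucc)) =
          f (Function.update v i.succ (r • v i.succ))) →
      ∀ v, f v = 0)
    (add_left : ∀ i p p' m, tp i (p + p') m = tp i p m + tp i p' m)
    (add_right : ∀ i p m m', tp i p (m + m') = tp i p m + tp i p m')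
    (balanced : ∀ i (r : R) p m, tp i (MulOpposite.op r • p) m = tp i p (r • m))
    (smul : ∀ i (r : Rᵐᵒᵖ) p m, tp i p (r • m) = r • tp i p m)
    (hext : ∀ i (A : Type) [AddCommGroup A] (f g : P (i + 1) →+ A),
      (∀ p m, f (tp i p m) = g (tp i p m)) → f = g) :
    Subsingleton (P (n + 1)) := by
  have hzero : AddMonoidHom.id (P (n + 1)) = 0 :=
    tensorWord_hom_ext tp add_left hext fun p =>
      hnil _ (tensorWord tp (n + 1) p) (tensorWord_update_add tp add_left add_right p)
        (tensorWord_update_balanced tp balanced smul p)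
  exact ⟨fun a b => (DFunLike.congr_fun hzero a).trans (DFunLike.congr_fun hzero b).symm⟩

end TensorTower

/-! **Statement 17.** Let `R` be a ring and `M` a nilpotent `R`-`R`-bimodule
(`M^{⊗(n+1)} = 0`).  For every module `(X, u)` over the tensor ring
`T_R(M) = ⊕_{i≥0} M^{⊗i}` there is a short exact sequence of `T_R(M)`-modules
`0 → (Ind(X⊗_R M), c_{X⊗M}) → (Ind(X), c_X) → (X, u) → 0`,
where the surjection restricted to `X⊗M^{⊗i}` is `u` composed `i` times.

Right modules are `Rᵐᵒᵖ`-modules.  The iterated tensor products `X ⊗ M^{⊗i}`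
are given by a tower of realizations `P i` with universal balanced pairings
`tp i`, `P 0 ≅ X`; the module structure `u` is a balanced pairing `γX`; the
maps `u ⊗ M^{⊗i} : P (i+1) → P i` form the family `U`, and the iterates of `u`
form the family `V : P i → X`.  `Ind(X⊗M)` uses the shifted tower `P (i+1)`;
the injection sends a family `(z_i)` to `(z_{j-1} − U(z_j))_j`, and the
surjection is `(w_j) ↦ Σ_j V(w_j)`. -/

noncomputable section

variable (R M : Type) [Ring R] [AddCommGroup M] [Module R M] [Module Rᵐᵒᵖ M]
  [SMulCommClass R Rᵐᵒᵖ M] (n : ℕ)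
  (X : Type) [AddCommGroup X] [Module Rᵐᵒᵖ X]
  (P : ℕ → Type) [∀ i, AddCommGroup (P i)] [∀ i, Module Rᵐᵒᵖ (P i)]
  (e0 : P 0 ≃ₗ[Rᵐᵒᵖ] X)
  (tp : ∀ i, P i → M → P (i + 1))
  (U : ∀ i, P (i + 1) →ₗ[Rᵐᵒᵖ] P i)
  (V : ∀ i, P i →ₗ[Rᵐᵒᵖ] X)

/-- `Ind(X) = ⊕_{i=0}^n X ⊗ M^{⊗i}`. -/
abbrev IndX : Type := (j : Fin (n + 1)) → P j.val

/-- `Ind(X⊗M) = ⊕_{i=0}^n (X⊗M) ⊗ M^{⊗i}`, via the shifted tower. -/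
abbrev IndXM : Type := (j : Fin (n + 1)) → P (j.val + 1)

/-- The structure map `c_X` of `Ind(X)`, as a pairing. -/
def cX : IndX n P → M → IndX n P := fun w m j =>
  match j with
  | ⟨0, _⟩ => 0
  | ⟨k + 1, hk⟩ => tp k (w ⟨k, Nat.lt_of_succ_lt hk⟩) m

/-- The structure map `c_{X⊗M}` of `Ind(X⊗M)`, as a pairing. -/
def cXM : IndXM n P → M → IndXM n P := fun w m j =>
  match j with
  | ⟨0, _⟩ => 0
  | ⟨k + 1, hk⟩ => tp (k + 1) (w ⟨k, Nat.lt_of_succ_lt hk⟩) m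

/-- The injection `Ind(X⊗M) → Ind(X)`, `(z_i) ↦ (z_{j-1} − U(z_j))_j`. -/
def psi : IndXM n P → IndX n P := fun w j =>
  (match j with
    | ⟨0, _⟩ => 0
    | ⟨k + 1, hk⟩ => w ⟨k, Nat.lt_of_succ_lt hk⟩) - U j.val (w j)

/-- The surjection `Ind(X) → X`, `(w_j) ↦ Σ_j V(w_j)` (iterated `u`). -/
def phi : IndX n P → X := fun w => ∑ j : Fin (n + 1), V j.val (w j)

section

variable {R n X P U V}

theorem psi_mk_zero (w : IndXM n P) (h : 0 < n + 1) : psi R n P U w ⟨0, h⟩ = -U 0 (w ⟨0, h⟩) :=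
  zero_sub _

theorem psi_mk_succ (w : IndXM n P) (k : ℕ) (h : k + 1 < n + 1) :
    psi R n P U w ⟨k + 1, h⟩ = w ⟨k, by omega⟩ - U (k + 1) (w ⟨k + 1, h⟩) := rfl

variable (R n P U) in
def psiLinear : IndXM n P →ₗ[Rᵐᵒᵖ] IndX n P where
  toFun := psi R n P U
  map_add' w w' := by
    funext j
    rcases j with ⟨_ | k, hk⟩
    · simp only [Pi.add_apply, psi_mk_zero, map_add, neg_add]
    · simp only [Pi.add_apply, psi_mk_succ, map_add]; abel
  map_smul' r w := by
    funext j
    rcases j with ⟨_ | k, hk⟩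
    · simp only [Pi.smul_apply, psi_mk_zero, map_smul, smul_neg, RingHom.id_apply]
    · simp only [Pi.smul_apply, psi_mk_succ, map_smul, smul_sub, RingHom.id_apply]

variable (R n X P V) in
def phiLinear : IndX n P →ₗ[Rᵐᵒᵖ] X where
  toFun := phi R n X P V
  map_add' w w' := by simp [phi, Finset.sum_add_distrib]
  map_smul' r w := by simp [phi, Finset.smul_sum]

theorem phi_eq_of_forall_succ_eq_zero (w : IndX n P)
    (hw : ∀ k (h : k + 1 < n + 1), w ⟨k + 1, h⟩ = 0) :
    phi R n X P V w = V 0 (w ⟨0, Nat.zero_lt_succ n⟩) := by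
  rw [phi, Fin.sum_univ_succ, Finset.sum_eq_zero fun i _ => ?_, add_zero]
  · rfl
  · rw [show w i.succ = 0 from hw i i.succ.isLt, map_zero]

theorem phi_surjective (hV : Function.Surjective (V 0)) :
    Function.Surjective (phi R n X P V) := by
  intro x
  obtain ⟨p, rfl⟩ := hV x
  exact ⟨Fin.cases p fun _ => 0, phi_eq_of_forall_succ_eq_zero _ fun _ _ => rfl⟩

theorem psi_injective [Subsingleton (P (n + 1))] : Function.Injective (psi R n P U) := by
  refine (injective_iff_map_eq_zero (psiLinear R n P U)).mpr fun z hz => funext fun j => ?_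
  induction j using Fin.reverseInduction with
  | last => exact Subsingleton.elim (α := P (n + 1)) _ _
  | cast i ih =>
    have h : psi R n P U z ⟨i + 1, i.succ.isLt⟩ = 0 := congrFun hz i.succ
    rwa [psi_mk_succ, show z ⟨i + 1, _⟩ = 0 from ih, map_zero, sub_zero] at h

theorem phi_psi (hVU : ∀ k (p : P (k + 1)), V k (U k p) = V (k + 1) p) (z : IndXM n P) :
    phi R n X P V (psi R n P U z) = -V (n + 1) (z (Fin.last n)) := by
  set a : Fin (n + 1) → X := fun j => V (j + 1) (z j)
  have h0 : V (0 : Fin (n + 1)) (psi R n P U z 0) = -a 0 := by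
    show V 0 (psi R n P U z ⟨0, n.zero_lt_succ⟩) = -V 1 (z ⟨0, n.zero_lt_succ⟩)
    rw [psi_mk_zero, map_neg, hVU]
  have hsucc : ∀ i : Fin n, V i.succ (psi R n P U z i.succ) = a i.castSucc - a i.succ := by
    intro i
    show V (i + 1) (psi R n P U z ⟨i + 1, _⟩) = V (i + 1) (z ⟨i, _⟩) - V (i + 2) (z ⟨i + 1, _⟩)
    rw [psi_mk_succ, map_sub, hVU]
  have sum_castSucc := Fin.sum_univ_castSucc a
  have sum_succ := Fin.sum_univ_succ a
  calc phi R n X P V (psi R n P U z)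
      = -a 0 + ∑ i : Fin n, (a i.castSucc - a i.succ) := by
        rw [phi, Fin.sum_univ_succ, h0, Finset.sum_congr rfl fun i _ => hsucc i]
    _ = -a (Fin.last n) := by
        rw [Finset.sum_sub_distrib, eq_sub_of_add_eq sum_castSucc.symm,
          eq_sub_of_add_eq' sum_succ.symm]
        abel

theorem phi_psi_eq_zero [Subsingleton (P (n + 1))]
    (hVU : ∀ k (p : P (k + 1)), V k (U k p) = V (k + 1) p) (z : IndXM n P) :
    phi R n X P V (psi R n P U z) = 0 := by
  rw [phi_psi hVU, Subsingleton.elim (α := P (n + 1)) (z (Fin.last n)) 0, map_zero, neg_zero]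

variable (U) in
def psiPreimage (w : IndX n P) : IndXM n P :=
  Fin.reverseInduction (motive := fun j => P (j + 1)) 0 fun i z =>
    U (i + 1) z + w ⟨i + 1, i.succ.isLt⟩

theorem psiPreimage_mk (w : IndX n P) (k : ℕ) (h : k < n) :
    psiPreimage U w ⟨k, by omega⟩ =
      U (k + 1) (psiPreimage U w ⟨k + 1, by omega⟩) + w ⟨k + 1, by omega⟩ :=
  Fin.reverseInduction_castSucc (i := ⟨k, h⟩) ..

theorem psi_psiPreimage_mk_succ (w : IndX n P) (k : ℕ) (h : k + 1 < n + 1) :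
    psi R n P U (psiPreimage U w) ⟨k + 1, h⟩ = w ⟨k + 1, h⟩ := by
  rw [psi_mk_succ, psiPreimage_mk w k (by omega), add_sub_cancel_left]

theorem phi_eq_zero_iff [Subsingleton (P (n + 1))]
    (hVU : ∀ k (p : P (k + 1)), V k (U k p) = V (k + 1) p) (hV : Function.Injective (V 0))
    (w : IndX n P) : phi R n X P V w = 0 ↔ ∃ z, psi R n P U z = w := by
  refine ⟨fun hw => ⟨psiPreimage U w, funext fun j => ?_⟩,
    fun ⟨z, hz⟩ => hz ▸ phi_psi_eq_zero hVU z⟩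
  set d := w - psi R n P U (psiPreimage U w)
  have hd : ∀ k (h : k + 1 < n + 1), d ⟨k + 1, h⟩ = 0 := fun k h => by
    simp only [d, Pi.sub_apply, psi_psiPreimage_mk_succ, sub_self]
  have hd0 : V 0 (d ⟨0, Nat.zero_lt_succ n⟩) = 0 := by
    have hsub : phi R n X P V d = phi R n X P V w - phi R n X P V (psi R n P U _) :=
      map_sub (phiLinear R n X P V) _ _
    rw [← phi_eq_of_forall_succ_eq_zero d hd, hsub, hw, phi_psi_eq_zero hVU, sub_zero]
  rcases j with ⟨_ | k, hk⟩
  · exact (sub_eq_zero.1 (hV (hd0.trans (map_zero _).symm))).symm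
  · exact (sub_eq_zero.1 (hd k hk)).symm

end

theorem tensorRing_canonical_ses
    -- `M` is nilpotent: `M^{⊗(n+1)} = 0`
    (hnil : ∀ (A : Type) [AddCommGroup A] (f : (Fin (n + 1) → M) → A),
      (∀ (v : Fin (n + 1) → M) (i : Fin (n + 1)) (m m' : M),
        f (Function.update v i (m + m')) =
          f (Function.update v i m) + f (Function.update v i m')) →
      (∀ (v : Fin (n + 1) → M) (i : Fin n) (r : R),
        f (Function.update v i.castSucc (MulOpposite.op r • v i.castSucc)) =
          f (Function.update v i.succ (r • v i.succ))) →
      ∀ v, f v = 0)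
    -- the `tp i` are balanced bi-additive universal pairings:
    (tp_add_left : ∀ i p p' m, tp i (p + p') m = tp i p m + tp i p' m)
    (tp_add_right : ∀ i p m m', tp i p (m + m') = tp i p m + tp i p m')
    (tp_balanced : ∀ i (r : R) p m,
      tp i (MulOpposite.op r • p) m = tp i p (r • m))
    (tp_smul : ∀ i (r : Rᵐᵒᵖ) p m, tp i p (r • m) = r • tp i p m)
    (tp_universal : ∀ i (A : Type) [AddCommGroup A] (h : P i → M → A),
      (∀ p p' m, h (p + p') m = h p m + h p' m) →
      (∀ p m m', h p (m + m') = h p m + h p m') →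
      (∀ (r : R) p m, h (MulOpposite.op r • p) m = h p (r • m)) →
      ∃! g : P (i + 1) →+ A, ∀ p m, g (tp i p m) = h p m)
    -- the `T_R(M)`-module `(X, u)`, as a balanced pairing `γX`:
    (γX : X → M → X)
    (γX_add_left : ∀ x x' m, γX (x + x') m = γX x m + γX x' m)
    -- `U i = u ⊗ M^{⊗i}` and `V i = u` iterated `i` times:
    (hU0 : ∀ p m, U 0 (tp 0 p m) = e0.symm (γX (e0 p) m))
    (hUsucc : ∀ i p m, U (i + 1) (tp (i + 1) p m) = tp i (U i p) m)
    (hV0 : ∀ p, V 0 p = e0 p)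
    (hVsucc : ∀ i p m, V (i + 1) (tp i p m) = γX (V i p) m) :
    -- `ψ` and `φ` are morphisms of `T_R(M)`-modules ...
    (∀ w m, psi R n P U (cXM M n P tp w m) = cX M n P tp (psi R n P U w) m) ∧
    (∀ w m, phi R n X P V (cX M n P tp w m) = γX (phi R n X P V w) m) ∧
    (∀ w w', psi R n P U (w + w') = psi R n P U w + psi R n P U w') ∧
    (∀ (r : Rᵐᵒᵖ) w, psi R n P U (r • w) = r • psi R n P U w) ∧
    (∀ w w', phi R n X P V (w + w') = phi R n X P V w + phi R n X P V w') ∧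
    (∀ (r : Rᵐᵒᵖ) w, phi R n X P V (r • w) = r • phi R n X P V w) ∧
    -- ... and they form a short exact sequence:
    Function.Injective (psi R n P U) ∧
    Function.Surjective (phi R n X P V) ∧
    (∀ w, phi R n X P V w = 0 ↔ ∃ z, psi R n P U z = w) := by
  have hext : ∀ i (A : Type) [AddCommGroup A] (f g : P (i + 1) →+ A),
      (∀ p m, f (tp i p m) = g (tp i p m)) → f = g := fun i _ _ _ _ =>
    pairing_hom_ext (tp_add_left i) (tp_add_right i) (tp_balanced i) (tp_universal i)
  have := subsingleton_of_nilpotent tp n hnil tp_add_left tp_add_right tp_balanced tp_smul hext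
  have hVU := V_apply_U tp hext hU0 hUsucc hV0 hVsucc
  have hV0' : ⇑(V 0) = e0 := funext hV0
  let tpHom (i : ℕ) (m : M) : P i →+ P (i + 1) := .mk' (tp i · m) (tp_add_left i · · m)
  have tp_zero : ∀ i m, tp i 0 m = 0 := fun i m => map_zero (tpHom i m)
  have tp_sub : ∀ i (a b : P i) m, tp i (a - b) m = tp i a m - tp i b m := fun i a b m =>
    map_sub (tpHom i m) a b
  refine ⟨fun w m => funext fun j => ?_, fun w m => ?_, map_add (psiLinear R n P U),
    map_smul (psiLinear R n P U), map_add (phiLinear R n X P V), map_smul (phiLinear R n X P V),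
    psi_injective, phi_surjective (hV0' ▸ e0.surjective),
    phi_eq_zero_iff hVU (hV0' ▸ e0.injective)⟩
  · rcases j with ⟨_ | _ | k, hk⟩
    · show (0 : P 0) - U 0 (0 : P 1) = 0
      rw [map_zero, sub_zero]
    · show (0 : P 1) - U 1 (tp 1 _ m) = tp 0 ((0 : P 0) - U 0 _) m
      rw [hUsucc, tp_sub, tp_zero]
    · show tp (k + 1) _ m - U (k + 2) (tp (k + 2) _ m) = tp (k + 1) (_ - U (k + 1) _) m
      rw [hUsucc, tp_sub]
  · let γm : X →+ X := .mk' (γX · m) (γX_add_left · · m)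
    have h0 : V (0 : Fin (n + 1)) (cX M n P tp w m 0) = 0 := map_zero (V 0)
    have htop : γm (V (Fin.last n) (w (Fin.last n))) = 0 := by
      show γX (V n _) m = 0
      rw [← hVsucc, Subsingleton.elim (α := P (n + 1)) (tp n _ m) 0, map_zero]
    show ∑ j : Fin (n + 1), V j (cX M n P tp w m j) = γm (∑ j : Fin (n + 1), V j (w j))
    rw [map_sum, Fin.sum_univ_succ, Fin.sum_univ_castSucc, h0, htop, zero_add, add_zero]
    exact Finset.sum_congr rfl fun i _ => hVsucc i _ m
end
end
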